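/- For a Tychonoff space X, the Hewitt realcompactification υX is locally compact if and only if every z-ultrafilter in X with the countable intersection property has an element contained in a cozero-set of X with pseudocompact closure in X. -/

import Mathlib

/-!
Every z-ultrafilter on `X` is `A^p = {Z | p ∈ cl_{βX} Z}` for some `p ∈ βX`, and `A^p` has the
countable intersection property exactly when `p ∈ υX`. For an open `C ⊆ X`, `cl_X C` is
pseudocompact exactly when `cl_{βX} C ⊆ υX`. A compact neighbourhood of `p` in `υX` therefore
yields a zero-set `Z ∈ A^p` inside a cozero-set `C` with pseudocompact closure; conversely, for
such `Z ⊆ C` the compact set `cl_{βX} C` is a neighbourhood of `p` contained in `υX`, because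
`Z` and `X \ C` are disjoint zero-sets and so have disjoint closures in `βX`.
-/

open Set Topology

/-- A zero-set: the preimage of `{0}` under a continuous real-valued function. -/
def IsZeroSet {Y : Type*} [TopologicalSpace Y] (Z : Set Y) : Prop :=
  ∃ f : C(Y, ℝ), Z = f ⁻¹' {0}

/-- A cozero-set: the complement of a zero-set. -/
def IsCozeroSet {Y : Type*} [TopologicalSpace Y] (C : Set Y) : Prop :=
  IsZeroSet Cᶜ

/-- A space is pseudocompact if every continuous real-valued function on it is bounded. -/
def IsPseudocompact (Y : Type*) [TopologicalSpace Y] : Prop :=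
  ∀ f : C(Y, ℝ), ∃ M : ℝ, ∀ y, |f y| ≤ M

/-- A subset is pseudocompact if it is pseudocompact as a subspace. -/
def IsPseudocompactSet {Y : Type*} [TopologicalSpace Y] (A : Set Y) : Prop :=
  ∀ f : C(A, ℝ), ∃ M : ℝ, ∀ a, |f a| ≤ M

/-- The Hewitt realcompactification `υX`, realized as the subspace of `βX` consisting of
those `p ∈ βX` such that every zero-set of `βX` containing `p` meets `X`. -/
def upsilonSet (X : Type*) [TopologicalSpace X] : Set (StoneCech X) :=
  {p | ∀ Z : Set (StoneCech X), IsZeroSet Z → p ∈ Z →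
    (Z ∩ Set.range (stoneCechUnit : X → StoneCech X)).Nonempty}

/-- `ζX = X ∪ cl_{βX}(βX \ υX)`, as a subset of `βX`. -/
def zetaSet (X : Type*) [TopologicalSpace X] : Set (StoneCech X) :=
  Set.range (stoneCechUnit : X → StoneCech X) ∪ closure (upsilonSet X)ᶜ

/-- A z-filter on `Y`: a nonempty family of nonempty zero-sets, closed under finite
intersections and under zero-set supersets. -/
def IsZFilter {Y : Type*} [TopologicalSpace Y] (F : Set (Set Y)) : Prop :=
  F.Nonempty ∧ (∀ Z ∈ F, IsZeroSet Z ∧ Z.Nonempty) ∧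
    (∀ Z ∈ F, ∀ W ∈ F, Z ∩ W ∈ F) ∧
    (∀ Z ∈ F, ∀ W : Set Y, IsZeroSet W → Z ⊆ W → W ∈ F)

/-- A z-ultrafilter: a maximal z-filter. -/
def IsZUltrafilter {Y : Type*} [TopologicalSpace Y] (F : Set (Set Y)) : Prop :=
  IsZFilter F ∧ ∀ G : Set (Set Y), IsZFilter G → F ⊆ G → G = F

/-- A family of sets has the countable intersection property if every countable
subfamily has nonempty intersection. -/
def HasCIP {Y : Type*} (F : Set (Set Y)) : Prop :=
  ∀ G ⊆ F, G.Countable → (⋂₀ G).Nonempty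

section ZeroSets

variable {Y Y' : Type*} [TopologicalSpace Y] [TopologicalSpace Y']

lemma isZeroSet_univ : IsZeroSet (univ : Set Y) :=
  ⟨0, by ext; simp⟩

lemma IsZeroSet.preimage {Z : Set Y'} (hZ : IsZeroSet Z) (g : C(Y, Y')) :
    IsZeroSet (g ⁻¹' Z) := by
  obtain ⟨f, rfl⟩ := hZ
  exact ⟨f.comp g, rfl⟩

lemma IsCozeroSet.preimage {C : Set Y'} (hC : IsCozeroSet C) (g : C(Y, Y')) :
    IsCozeroSet (g ⁻¹' C) :=
  IsZeroSet.preimage hC g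

lemma IsClosed.isZeroSet [PerfectlyNormalSpace Y] {S : Set Y} (hS : IsClosed S) :
    IsZeroSet S := by
  obtain ⟨f, hf, -⟩ := perfectlyNormalSpace_iff_forall_isClosed_preimage_zero.1 ‹_› S hS
  exact ⟨f, hf⟩

lemma IsOpen.isCozeroSet [PerfectlyNormalSpace Y] {U : Set Y} (hU : IsOpen U) :
    IsCozeroSet U :=
  hU.isClosed_compl.isZeroSet

lemma IsZeroSet.isClosed {Z : Set Y} (hZ : IsZeroSet Z) : IsClosed Z := by
  obtain ⟨f, rfl⟩ := hZ
  exact isClosed_singleton.preimage f.continuous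

lemma IsCozeroSet.isOpen {C : Set Y} (hC : IsCozeroSet C) : IsOpen C :=
  isClosed_compl_iff.1 hC.isClosed

/-- A countable intersection of zero-sets is the preimage of `0` under a map into the
metrizable space `ι → ℝ`. -/
lemma IsZeroSet.iInter {ι : Type*} [Countable ι] {Z : ι → Set Y} (hZ : ∀ i, IsZeroSet (Z i)) :
    IsZeroSet (⋂ i, Z i) := by
  choose f hf using hZ
  have : ⋂ i, Z i = ContinuousMap.pi f ⁻¹' {0} := by
    ext y
    simp [hf, funext_iff]
  rw [this]
  exact isClosed_singleton.isZeroSet.preimage _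

lemma IsZeroSet.inter {Z W : Set Y} (hZ : IsZeroSet Z) (hW : IsZeroSet W) :
    IsZeroSet (Z ∩ W) := by
  obtain ⟨f, rfl⟩ := hZ
  obtain ⟨g, rfl⟩ := hW
  have : f ⁻¹' {0} ∩ g ⁻¹' {0} = (f.prodMk g) ⁻¹' {0} := by
    ext y
    simp [Prod.ext_iff]
  rw [this]
  exact isClosed_singleton.isZeroSet.preimage _

end ZeroSets

section StoneCech

variable {X : Type*} [TopologicalSpace X]

lemma range_subset_upsilonSet : range (stoneCechUnit : X → StoneCech X) ⊆ upsilonSet X := by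
  rintro _ ⟨x, rfl⟩ Z - hZ
  exact ⟨_, hZ, x, rfl⟩

lemma exists_stoneCech_extension {f : C(X, ℝ)} {a b : ℝ} (hf : ∀ x, f x ∈ Icc a b) :
    ∃ F : C(StoneCech X, ℝ), (∀ x, F (stoneCechUnit x) = f x) ∧ ∀ q, F q ∈ Icc a b := by
  have hf' : Continuous fun x => (⟨f x, hf x⟩ : Icc a b) := by fun_prop
  refine ⟨⟨fun q => ((stoneCechExtend hf' q : Icc a b) : ℝ),
    continuous_subtype_val.comp (continuous_stoneCechExtend hf')⟩, fun x => ?_,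
    fun q => (stoneCechExtend hf' q).2⟩
  simp

lemma mem_closure_stoneCechUnit_image_inter_preimage {p : StoneCech X} {Z : Set X}
    {U : Set (StoneCech X)} (hp : p ∈ closure (stoneCechUnit '' Z)) (hU : U ∈ 𝓝 p) :
    p ∈ closure (stoneCechUnit '' (Z ∩ stoneCechUnit ⁻¹' U)) := by
  rw [image_inter_preimage, mem_closure_iff_nhds]
  intro t ht
  obtain ⟨q, ⟨hqt, hqU⟩, hqZ⟩ := mem_closure_iff_nhds.1 hp (t ∩ U) (Filter.inter_mem ht hU)
  exact ⟨q, hqt, hqZ, hqU⟩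

lemma mem_closure_stoneCechUnit_image_preimage {p : StoneCech X} {U : Set (StoneCech X)}
    (hU : U ∈ 𝓝 p) :
    p ∈ closure (stoneCechUnit '' (stoneCechUnit ⁻¹' U)) := by
  simpa using mem_closure_stoneCechUnit_image_inter_preimage (Z := univ)
    (by simp [denseRange_stoneCechUnit.closure_range]) hU

/-- Disjoint zero-sets are completely separated, by `|f| / (|f| + |g|)`. -/
lemma IsZeroSet.disjoint_closure_stoneCechUnit_image {Z W : Set X} (hZ : IsZeroSet Z)
    (hW : IsZeroSet W) (hd : Disjoint Z W) :
    Disjoint (closure (stoneCechUnit '' Z)) (closure (stoneCechUnit '' W)) := by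
  obtain ⟨f, rfl⟩ := hZ
  obtain ⟨g, rfl⟩ := hW
  have hpos : ∀ x, 0 < |f x| + |g x| := fun x => by
    rcases eq_or_ne (f x) 0 with hfx | hfx
    · exact add_pos_of_nonneg_of_pos (abs_nonneg _) (abs_pos.2 (disjoint_left.1 hd hfx))
    · exact add_pos_of_pos_of_nonneg (abs_pos.2 hfx) (abs_nonneg _)
  let k : C(X, ℝ) := ⟨fun x => |f x| / (|f x| + |g x|),
    Continuous.div (by fun_prop) (by fun_prop) fun x => (hpos x).ne'⟩
  have hk : ∀ x, k x ∈ Icc 0 1 := fun x =>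
    ⟨div_nonneg (abs_nonneg _) (hpos x).le,
      div_le_one_of_le₀ (le_add_of_nonneg_right (abs_nonneg _)) (hpos x).le⟩
  obtain ⟨K, hKe, -⟩ := exists_stoneCech_extension hk
  have h0 : closure (stoneCechUnit '' (f ⁻¹' {0})) ⊆ K ⁻¹' {0} := by
    refine closure_minimal ?_ (isClosed_singleton.preimage K.continuous)
    rintro _ ⟨x, hx, rfl⟩
    simp_all [k]
  have h1 : closure (stoneCechUnit '' (g ⁻¹' {0})) ⊆ K ⁻¹' {1} := by
    refine closure_minimal ?_ (isClosed_singleton.preimage K.continuous)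
    rintro _ ⟨x, hx, rfl⟩
    have hfx : f x ≠ 0 := disjoint_right.1 hd hx
    simp_all [k]
  exact ((disjoint_singleton.2 zero_ne_one).preimage K).mono h0 h1

lemma closure_stoneCechUnit_image_mem_nhds {p : StoneCech X} {Z C : Set X} (hZ : IsZeroSet Z)
    (hC : IsCozeroSet C) (hZC : Z ⊆ C) (hp : p ∈ closure (stoneCechUnit '' Z)) :
    closure (stoneCechUnit '' C) ∈ 𝓝 p := by
  have hd := hZ.disjoint_closure_stoneCechUnit_image hC (disjoint_compl_right_iff_subset.2 hZC)
  refine Filter.mem_of_superset (isClosed_closure.isOpen_compl.mem_nhds (disjoint_left.1 hd hp)) ?_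
  intro q hq
  have hcover : q ∈ closure (stoneCechUnit '' C) ∪ closure (stoneCechUnit '' Cᶜ) := by
    rw [← closure_union, ← image_union, union_compl_self, image_univ,
      denseRange_stoneCechUnit.closure_range]
    trivial
  exact hcover.resolve_right hq

/-- A Urysohn function `h` on `βX` with `h p = 1` and `h = 0` off `U` gives
`Z = {1/2 ≤ h}` and `C = {0 < h}`. -/
lemma exists_isZeroSet_isCozeroSet_of_mem_nhds {p : StoneCech X} {U : Set (StoneCech X)}
    (hU : U ∈ 𝓝 p) :
    ∃ V ∈ 𝓝 p, ∃ Z C : Set X, IsZeroSet Z ∧ IsCozeroSet C ∧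
      stoneCechUnit ⁻¹' V ⊆ Z ∧ Z ⊆ C ∧ C ⊆ stoneCechUnit ⁻¹' U := by
  obtain ⟨h, h0, h1, -⟩ := exists_continuous_zero_one_of_isClosed isOpen_interior.isClosed_compl
    isClosed_singleton (disjoint_singleton_right.2 fun hp => hp (mem_interior_iff_mem_nhds.2 hU))
  let e : C(X, StoneCech X) := ⟨stoneCechUnit, continuous_stoneCechUnit⟩
  refine ⟨h ⁻¹' Ioi (1 / 2), isOpen_Ioi.preimage h.continuous |>.mem_nhds (by norm_num [h1 rfl]),
    e ⁻¹' (h ⁻¹' Ici (1 / 2)), e ⁻¹' (h ⁻¹' Ioi 0), (isClosed_Ici.isZeroSet.preimage h).preimage e,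
    (isOpen_Ioi.isCozeroSet.preimage h).preimage e,
    preimage_mono (preimage_mono Ioi_subset_Ici_self),
    preimage_mono (preimage_mono (Ici_subset_Ioi.2 (by norm_num))), preimage_mono ?_⟩
  intro q (hq : 0 < h q)
  by_contra hqU
  exact hq.ne' (h0 fun hint => hqU (interior_subset hint))

end StoneCech

section ZFilterAt

variable {X : Type*} [TopologicalSpace X]

/-- The z-ultrafilter `A^p` of Gillman–Jerison. -/
def zFilterAt (p : StoneCech X) : Set (Set X) :=
  {Z | IsZeroSet Z ∧ p ∈ closure (stoneCechUnit '' Z)}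

lemma closure_stoneCechUnit_image_inter {Z W : Set X} (hZ : IsZeroSet Z) (hW : IsZeroSet W) :
    closure (stoneCechUnit '' (Z ∩ W)) =
      closure (stoneCechUnit '' Z) ∩ closure (stoneCechUnit '' W) := by
  refine (subset_inter (closure_mono (image_mono inter_subset_left))
    (closure_mono (image_mono inter_subset_right))).antisymm ?_
  rintro p ⟨hpZ, hpW⟩
  by_contra hp
  obtain ⟨V, hV, Z', C', hZ', -, hVZ', hZ'C', hC'⟩ :=
    exists_isZeroSet_isCozeroSet_of_mem_nhds (isClosed_closure.isOpen_compl.mem_nhds hp)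
  have hd : Disjoint (Z ∩ Z') (W ∩ Z') := disjoint_left.2 fun x ⟨hxZ, hxZ'⟩ ⟨hxW, _⟩ =>
    hC' (hZ'C' hxZ') (subset_closure ⟨x, ⟨hxZ, hxW⟩, rfl⟩)
  have hclosure {T : Set X} (hT : p ∈ closure (stoneCechUnit '' T)) :
      p ∈ closure (stoneCechUnit '' (T ∩ Z')) :=
    closure_mono (image_mono (inter_subset_inter_right _ hVZ'))
      (mem_closure_stoneCechUnit_image_inter_preimage hT hV)
  exact disjoint_left.1 ((hZ.inter hZ').disjoint_closure_stoneCechUnit_image (hW.inter hZ') hd)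
    (hclosure hpZ) (hclosure hpW)

lemma isZFilter_zFilterAt (p : StoneCech X) : IsZFilter (zFilterAt p) := by
  refine ⟨⟨univ, isZeroSet_univ, by simp [denseRange_stoneCechUnit.closure_range]⟩, ?_, ?_, ?_⟩
  · exact fun Z ⟨hZ, hpZ⟩ => ⟨hZ, image_nonempty.1 (closure_nonempty_iff.1 ⟨p, hpZ⟩)⟩
  · exact fun Z ⟨hZ, hpZ⟩ W ⟨hW, hpW⟩ =>
      ⟨hZ.inter hW, closure_stoneCechUnit_image_inter hZ hW ▸ ⟨hpZ, hpW⟩⟩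
  · exact fun Z ⟨_, hpZ⟩ W hW hZW => ⟨hW, closure_mono (image_mono hZW) hpZ⟩

lemma isZUltrafilter_zFilterAt (p : StoneCech X) : IsZUltrafilter (zFilterAt p) := by
  refine ⟨isZFilter_zFilterAt p, fun G hG hpG => (subset_antisymm ?_ hpG)⟩
  intro Z hZG
  refine ⟨(hG.2.1 Z hZG).1, ?_⟩
  by_contra hp
  obtain ⟨V, hV, Z', C', hZ', -, hVZ', hZ'C', hC'⟩ :=
    exists_isZeroSet_isCozeroSet_of_mem_nhds (isClosed_closure.isOpen_compl.mem_nhds hp)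
  have hZ'p : Z' ∈ zFilterAt p :=
    ⟨hZ', closure_mono (image_mono hVZ') (mem_closure_stoneCechUnit_image_preimage hV)⟩
  obtain ⟨x, hxZ, hxZ'⟩ := (hG.2.1 _ (hG.2.2.1 Z hZG Z' (hpG hZ'p))).2
  exact hC' (hZ'C' hxZ') (subset_closure ⟨x, hxZ, rfl⟩)

lemma IsZFilter.exists_subset_zFilterAt {F : Set (Set X)} (hF : IsZFilter F) :
    ∃ p, F ⊆ zFilterAt p := by
  have : Nonempty F := hF.1.to_subtype
  obtain ⟨p, hp⟩ := IsCompact.nonempty_iInter_of_directed_nonempty_isCompact_isClosed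
    (fun Z : F => closure (stoneCechUnit '' (Z : Set X)))
    (fun Z W => ⟨⟨_, hF.2.2.1 _ Z.2 _ W.2⟩, closure_mono (image_mono inter_subset_left),
      closure_mono (image_mono inter_subset_right)⟩)
    (fun Z => ((hF.2.1 _ Z.2).2.image _).mono subset_closure)
    (fun _ => isClosed_closure.isCompact) (fun _ => isClosed_closure)
  exact ⟨p, fun Z hZ => ⟨(hF.2.1 Z hZ).1, mem_iInter.1 hp ⟨Z, hZ⟩⟩⟩

lemma IsZUltrafilter.exists_eq_zFilterAt {F : Set (Set X)} (hF : IsZUltrafilter F) :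
    ∃ p, F = zFilterAt p := by
  obtain ⟨p, hp⟩ := hF.1.exists_subset_zFilterAt
  exact ⟨p, (hF.2 _ (isZFilter_zFilterAt p) hp).symm⟩

lemma IsZeroSet.exists_isZeroSet_stoneCech {Z : Set X} (hZ : IsZeroSet Z) :
    ∃ Zβ : Set (StoneCech X), IsZeroSet Zβ ∧ closure (stoneCechUnit '' Z) ⊆ Zβ ∧
      stoneCechUnit ⁻¹' Zβ ⊆ Z := by
  obtain ⟨f, rfl⟩ := hZ
  let k : C(X, ℝ) := ⟨fun x => min |f x| 1, by fun_prop⟩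
  obtain ⟨K, hKe, -⟩ := exists_stoneCech_extension (f := k) (a := 0) (b := 1)
    fun x => ⟨le_min (abs_nonneg _) zero_le_one, min_le_right _ _⟩
  refine ⟨K ⁻¹' {0}, ⟨K, rfl⟩, closure_minimal ?_ (isClosed_singleton.preimage K.continuous), ?_⟩
  · rintro _ ⟨x, hx, rfl⟩
    simp_all [k]
  · intro x hx
    simp_all [k, min_eq_iff]

lemma hasCIP_zFilterAt {p : StoneCech X} (hp : p ∈ upsilonSet X) : HasCIP (zFilterAt p) := by
  intro G hG hGc
  have : Countable G := hGc.to_subtype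
  choose Zβ hZβ hZZβ hZβZ using fun Z : G => (hG Z.2).1.exists_isZeroSet_stoneCech
  obtain ⟨_, hq, x, rfl⟩ := hp (⋂ Z : G, Zβ Z) (IsZeroSet.iInter hZβ)
    (mem_iInter.2 fun Z => hZZβ Z (hG Z.2).2)
  exact ⟨x, fun Z hZ => hZβZ ⟨Z, hZ⟩ (mem_iInter.1 hq ⟨Z, hZ⟩)⟩

lemma mem_upsilonSet_of_hasCIP {p : StoneCech X} (h : HasCIP (zFilterAt p)) :
    p ∈ upsilonSet X := by
  rintro _ ⟨g, rfl⟩ (hp : g p = 0)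
  let U : ℕ → Set (StoneCech X) := fun n => g ⁻¹' Metric.closedBall 0 (1 / (n + 1))
  have hU : ∀ n, stoneCechUnit ⁻¹' U n ∈ zFilterAt p := fun n =>
    ⟨(Metric.isClosed_closedBall.isZeroSet.preimage g).preimage ⟨_, continuous_stoneCechUnit⟩,
      mem_closure_stoneCechUnit_image_preimage <| g.continuous.continuousAt.preimage_mem_nhds <|
        Metric.closedBall_mem_nhds_of_mem (by simp [hp, Nat.cast_add_one_pos])⟩
  obtain ⟨x, hx⟩ := h (range fun n => stoneCechUnit ⁻¹' U n) (range_subset_iff.2 hU)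
    (countable_range _)
  have hle : ∀ n : ℕ, |g (stoneCechUnit x)| ≤ 1 / (n + 1) := fun n => by
    simpa [U] using hx _ ⟨n, rfl⟩
  exact ⟨_, abs_nonpos_iff.1 (ge_of_tendsto' tendsto_one_div_add_atTop_nhds_zero_nat hle), x, rfl⟩

end ZFilterAt

section Subspace

variable {Y : Type*} [TopologicalSpace Y] {S : Set Y}

lemma exists_mem_nhds_closure_inter_subset [T2Space Y] [LocallyCompactSpace S] {p : Y}
    (hp : p ∈ S) : ∃ U ∈ 𝓝 p, closure (U ∩ S) ⊆ S := by
  obtain ⟨K, hKc, hK⟩ := exists_compact_mem_nhds (⟨p, hp⟩ : S)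
  obtain ⟨U, hU, hUK⟩ := (mem_nhds_subtype S _ K).1 hK
  refine ⟨U, hU, ?_⟩
  calc closure (U ∩ S)
      ⊆ Subtype.val '' K := closure_minimal (fun y ⟨hyU, hyS⟩ => ⟨⟨y, hyS⟩, hUK hyU, rfl⟩)
        (hKc.image continuous_subtype_val).isClosed
    _ ⊆ S := Subtype.coe_image_subset S K

lemma locallyCompactSpace_of_isCompact_mem_nhds [R1Space Y]
    (h : ∀ p ∈ S, ∃ K, IsCompact K ∧ K ⊆ S ∧ K ∈ 𝓝 p) : LocallyCompactSpace S := by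
  have : WeaklyLocallyCompactSpace S := ⟨fun ⟨p, hp⟩ => by
    obtain ⟨K, hK, hKS, hKp⟩ := h p hp
    refine ⟨Subtype.val ⁻¹' K, ?_, continuous_subtype_val.continuousAt.preimage_mem_nhds hKp⟩
    rwa [IsEmbedding.subtypeVal.isCompact_iff, Subtype.image_preimage_coe,
      inter_eq_right.2 hKS]⟩
  infer_instance

lemma LocallyFinite.image_val {ι : Type*} (hS : IsClosed S) {t : ι → Set S}
    (ht : LocallyFinite t) : LocallyFinite fun i => Subtype.val '' t i := by
  intro y
  by_cases hy : y ∈ S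
  · obtain ⟨N, hN, hfin⟩ := ht ⟨y, hy⟩
    obtain ⟨N', hN', hN'N⟩ := (mem_nhds_subtype S _ N).1 hN
    refine ⟨N', hN', hfin.subset ?_⟩
    rintro i ⟨_, ⟨z, hz, rfl⟩, hzN'⟩
    exact ⟨z, hz, hN'N hzN'⟩
  · refine ⟨Sᶜ, hS.isOpen_compl.mem_nhds hy, finite_empty.subset ?_⟩
    rintro i ⟨_, ⟨z, -, rfl⟩, hz⟩
    exact hz z.2

end Subspace

lemma locallyFinite_preimage_ball_one {Y : Type*} [TopologicalSpace Y] (f : C(Y, ℝ))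
    {c : ℕ → ℝ} (hc : ∀ n : ℕ, (n : ℝ) ≤ |c n|) :
    LocallyFinite fun n => f ⁻¹' Metric.ball (c n) 1 := by
  refine LocallyFinite.preimage_continuous (fun w => ?_) f.continuous
  refine ⟨Metric.ball w 1, Metric.ball_mem_nhds w one_pos,
    (finite_lt_nat ⌈|w| + 2⌉₊).subset fun n ⟨v, hvn, hvw⟩ => ?_⟩
  rw [Metric.mem_ball, Real.dist_eq, abs_sub_comm] at hvn
  rw [Metric.mem_ball, Real.dist_eq] at hvw
  have hcw : |c n - w| < 2 := by linarith [abs_sub_le (c n) v w]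
  exact Nat.lt_ceil.2 (by linarith [hc n, abs_sub_abs_le_abs_sub (c n) w])

/-- The sum of bumps `n • (1 - φₙ)`, with `φₙ (x n) = 0` and `φₙ = 1` off `U n`. -/
lemma exists_continuous_le_of_locallyFinite {Y : Type*} [TopologicalSpace Y]
    [CompletelyRegularSpace Y] {U : ℕ → Set Y} (hUo : ∀ n, IsOpen (U n)) (hU : LocallyFinite U)
    {x : ℕ → Y} (hx : ∀ n, x n ∈ U n) : ∃ σ : C(Y, ℝ), ∀ n : ℕ, (n : ℝ) ≤ σ (x n) := by
  choose φ hφc hφx hφ1 using fun n =>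
    CompletelyRegularSpace.completely_regular (x n) (U n)ᶜ (hUo n).isClosed_compl
      (not_not_intro (hx n))
  let ψ : ℕ → Y → ℝ := fun n y => n * (1 - φ n y)
  have hψ0 : ∀ n y, 0 ≤ ψ n y := fun n y =>
    mul_nonneg n.cast_nonneg (sub_nonneg.2 (φ n y).2.2)
  have hψU : ∀ n, Function.support (ψ n) ⊆ U n := fun n y hy => by
    by_contra hyU
    exact hy (by simp [ψ, hφ1 n hyU])
  refine ⟨⟨fun y => ∑ᶠ n, ψ n y, continuous_finsum (fun n => by fun_prop) (hU.subset hψU)⟩,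
    fun n => ?_⟩
  calc (n : ℝ) = ψ n (x n) := by simp [ψ, hφx n]
    _ ≤ ∑ᶠ m, ψ m (x n) := single_le_finsum n ((hU.point_finite (x n)).subset
        fun m hm => hψU m hm) fun m => hψ0 m (x n)

section Pseudocompact

variable {X : Type*} [TopologicalSpace X]

lemma closure_image_subset_upsilonSet_of_isPseudocompactSet {A : Set X}
    (hA : IsPseudocompactSet (closure A)) : closure (stoneCechUnit '' A) ⊆ upsilonSet X := by
  rintro q hq _ ⟨g, rfl⟩ (hqg : g q = 0)
  by_contra hne
  have hg : ∀ x, g (stoneCechUnit x) ≠ 0 := fun x hx => hne ⟨_, hx, x, rfl⟩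
  obtain ⟨M, hM⟩ := hA ⟨fun y => (g (stoneCechUnit y))⁻¹,
    ((g.continuous.comp continuous_stoneCechUnit).comp continuous_subtype_val).inv₀
      fun y => hg y⟩
  have hδ : (0 : ℝ) < (|M| + 1)⁻¹ := by positivity
  obtain ⟨_, hxδ, x, hxA, rfl⟩ := mem_closure_iff_nhds.1 hq _ <|
    ((Metric.isOpen_ball (x := 0)).preimage g.continuous).mem_nhds
      (show g q ∈ Metric.ball 0 _ by rw [hqg]; exact Metric.mem_ball_self hδ)
  have hgx : |g (stoneCechUnit x)| < (|M| + 1)⁻¹ := by simpa using hxδ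
  have hMx := hM ⟨x, subset_closure hxA⟩
  simp only [ContinuousMap.coe_mk, abs_inv] at hMx
  linarith [le_abs_self M, (lt_inv_comm₀ (abs_pos.2 (hg x)) (by positivity)).1 hgx]

/-- If `σ` were unbounded on `A`, a cluster point `q ∈ cl_{βX} A` of the sets `{n ≤ |σ|} ∩ A`
would lie in the zero-set of the extension of `1 / (|σ| + 1)`, which misses `X`. -/
lemma exists_bound_of_closure_image_subset_upsilonSet {A : Set X}
    (hA : closure (stoneCechUnit '' A) ⊆ upsilonSet X) (σ : C(X, ℝ)) :
    ∃ M, ∀ x ∈ A, |σ x| ≤ M := by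
  by_contra! hσ
  let T : ℕ → Set (StoneCech X) := fun n => closure (stoneCechUnit '' (A ∩ {x | n ≤ |σ x|}))
  obtain ⟨q, hq⟩ := IsCompact.nonempty_iInter_of_sequence_nonempty_isCompact_isClosed T
    (fun n => closure_mono (image_mono (inter_subset_inter_right _
      fun x (hx : ((n + 1 : ℕ) : ℝ) ≤ |σ x|) => show (n : ℝ) ≤ |σ x| by push_cast at hx; linarith)))
    (fun n => let ⟨x, hxA, hx⟩ := hσ n; ⟨_, subset_closure ⟨x, ⟨hxA, hx.le⟩, rfl⟩⟩)
    isClosed_closure.isCompact fun _ => isClosed_closure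
  let k : C(X, ℝ) := ⟨fun x => 1 / (|σ x| + 1), continuous_const.div (by fun_prop)
    fun x => by positivity⟩
  obtain ⟨H, hHe, hH⟩ := exists_stoneCech_extension (f := k) (a := 0) (b := 1) fun x =>
    ⟨show 0 ≤ 1 / (|σ x| + 1) by positivity,
      (div_le_one (by positivity)).2 (by linarith [abs_nonneg (σ x)])⟩
  have hle : ∀ n : ℕ, H q ≤ 1 / (n + 1) := fun n => by
    refine closure_minimal ?_ (isClosed_le H.continuous continuous_const) (mem_iInter.1 hq n)
    rintro _ ⟨x, ⟨-, hx⟩, rfl⟩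
    simp only [mem_ofPred_eq, hHe, k, ContinuousMap.coe_mk]
    gcongr
    exact hx
  have hHq : H q = 0 :=
    (ge_of_tendsto' tendsto_one_div_add_atTop_nhds_zero_nat hle).antisymm (hH q).1
  obtain ⟨_, hx, x, rfl⟩ :=
    hA (closure_mono (image_mono inter_subset_left) (mem_iInter.1 hq 0)) _ ⟨H, rfl⟩ hHq
  rw [mem_preimage, mem_singleton_iff, hHe] at hx
  exact (show (0 : ℝ) < 1 / (|σ x| + 1) by positivity).ne' hx

variable [CompletelyRegularSpace X]

/-- An unbounded `f` on `cl C` yields points `x n ∈ C` with `n ≤ |f|` near `x n`; the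
neighbourhoods form a locally finite family, so bumps at the `x n` sum to a continuous function
on `X` that is unbounded on `C`. -/
lemma isPseudocompactSet_closure_of_closure_image_subset_upsilonSet {C : Set X}
    (hC : IsOpen C) (hCυ : closure (stoneCechUnit '' C) ⊆ upsilonSet X) :
    IsPseudocompactSet (closure C) := by
  intro f
  by_contra! hf
  choose y hy using fun n : ℕ => hf n
  choose V hVo hV using fun n =>
    isOpen_induced_iff.1 ((Metric.isOpen_ball (x := f (y n)) (ε := 1)).preimage f.continuous)
  have hVC : ∀ n, V n ∩ C ⊆ Subtype.val '' (f ⁻¹' Metric.ball (f (y n)) 1) :=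
    fun n x ⟨hxV, hxC⟩ => ⟨⟨x, subset_closure hxC⟩, (hV n).subset hxV, rfl⟩
  have hyV : ∀ n, (y n : X) ∈ V n := fun n =>
    (hV n).superset (show y n ∈ f ⁻¹' Metric.ball (f (y n)) 1 from Metric.mem_ball_self one_pos)
  choose x hxV hxC using fun n => mem_closure_iff.1 (y n).2 _ (hVo n) (hyV n)
  obtain ⟨σ, hσ⟩ := exists_continuous_le_of_locallyFinite (fun n => (hVo n).inter hC)
    (((locallyFinite_preimage_ball_one f fun n => (hy n).le).image_val isClosed_closure).subset
      hVC) fun n => ⟨hxV n, hxC n⟩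
  obtain ⟨M, hM⟩ := exists_bound_of_closure_image_subset_upsilonSet hCυ σ
  obtain ⟨n, hn⟩ := exists_nat_gt M
  linarith [hM (x n) (hxC n), le_abs_self (σ (x n)), hσ n]

end Pseudocompact

theorem upsilon_locallyCompact_iff_general (X : Type*) [TopologicalSpace X]
    [CompletelyRegularSpace X] :
    LocallyCompactSpace (upsilonSet X) ↔
      ∀ F : Set (Set X), IsZUltrafilter F → HasCIP F →
        ∃ Z ∈ F, ∃ C : Set X, IsCozeroSet C ∧ IsPseudocompactSet (closure C) ∧ Z ⊆ C := by
  constructor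
  · intro _ F hF hCIP
    obtain ⟨p, rfl⟩ := hF.exists_eq_zFilterAt
    obtain ⟨U, hU, hUυ⟩ := exists_mem_nhds_closure_inter_subset (mem_upsilonSet_of_hasCIP hCIP)
    obtain ⟨V, hV, Z, C, hZ, hC, hVZ, hZC, hCU⟩ := exists_isZeroSet_isCozeroSet_of_mem_nhds hU
    have hCU' : stoneCechUnit '' C ⊆ U ∩ upsilonSet X := by
      rintro _ ⟨x, hx, rfl⟩
      exact ⟨hCU hx, range_subset_upsilonSet (mem_range_self x)⟩
    exact ⟨Z, ⟨hZ, closure_mono (image_mono hVZ) (mem_closure_stoneCechUnit_image_preimage hV)⟩,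
      C, hC,
      isPseudocompactSet_closure_of_closure_image_subset_upsilonSet hC.isOpen
        ((closure_mono hCU').trans hUυ), hZC⟩
  · intro h
    refine locallyCompactSpace_of_isCompact_mem_nhds fun p hp => ?_
    obtain ⟨Z, ⟨hZ, hpZ⟩, C, hC, hCps, hZC⟩ :=
      h _ (isZUltrafilter_zFilterAt p) (hasCIP_zFilterAt hp)
    exact ⟨_, isClosed_closure.isCompact,
      closure_image_subset_upsilonSet_of_isPseudocompactSet hCps,
      closure_stoneCechUnit_image_mem_nhds hZ hC hZC hpZ⟩

/-- `υX` is locally compact if and only if every z-ultrafilter in `X` with the countable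
intersection property has an element contained in a cozero-set of `X` with pseudocompact
closure. -/
theorem upsilon_locallyCompact_iff (X : Type*) [TopologicalSpace X] [T2Space X]
    [CompletelyRegularSpace X] :
    LocallyCompactSpace (upsilonSet X) ↔
      ∀ F : Set (Set X), IsZUltrafilter F → HasCIP F →
        ∃ Z ∈ F, ∃ C : Set X, IsCozeroSet C ∧ IsPseudocompactSet (closure C) ∧ Z ⊆ C :=
  upsilon_locallyCompact_iff_general X
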